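/- Let k ≥ 1 be a natural number, κ ≥ 1, λ₂ > 0, and let σ, β : Fin k → ℝ be positive with σ nonincreasing, σ(0) = 1, σ(k−1) = 1/κ, β nondecreasing, j ↦ σ_j² β_j nonincreasing, and ∑_{j<k} β_j² = 1. Then ∑_{j<k} ( ((σ_j β_j)² + λ₂) / (σ_j² β_j) )² ≤ k² (1 + λ₂ κ²)². -/

import Mathlib

/-!
Write `x_j = ((σ_j β_j)² + λ₂) / (σ_j² β_j) = β_j + λ₂ / (σ_j² β_j)` and let `β_L` be the last,
hence largest, `β_j`. Since `σ_j² β_j` is nonincreasing and `σ_L = 1/κ`, every denominator is at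
least `β_L / κ²`, so `β_L x_j ≤ β_L² + λ₂ κ² ≤ 1 + λ₂ κ²`. On the other hand `∑ β_j² = 1` forces
`k β_L² ≥ 1`, so `x_j² ≤ k (1 + λ₂ κ²)²` for each of the `k` terms.
-/

open Finset

theorem one_le_card_mul_sq_of_sum_sq_eq_one {ι : Type*} [Fintype ι] {f : ι → ℝ} {B : ℝ}
    (hf : ∀ i, 0 ≤ f i) (hfB : ∀ i, f i ≤ B) (hsum : ∑ i, f i ^ 2 = 1) :
    1 ≤ Fintype.card ι * B ^ 2 := by
  rw [← hsum, ← nsmul_eq_mul, ← card_univ]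
  exact sum_le_card_nsmul _ _ _ fun i _ => pow_le_pow_left₀ (hf i) (hfB i) 2

theorem sum_sq_le_card_sq_mul_sq_of_mul_le {ι : Type*} [Fintype ι] {x : ι → ℝ} {B c : ℝ}
    (hx : ∀ i, 0 ≤ x i) (hB : 0 ≤ B) (hxc : ∀ i, B * x i ≤ c) (hcard : 1 ≤ Fintype.card ι * B ^ 2) :
    ∑ i, x i ^ 2 ≤ Fintype.card ι ^ 2 * c ^ 2 := by
  have hBx : B ^ 2 * ∑ i, x i ^ 2 ≤ Fintype.card ι * c ^ 2 := by
    rw [mul_sum, ← nsmul_eq_mul, ← card_univ]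
    refine sum_le_card_nsmul _ _ _ fun i _ => ?_
    rw [← mul_pow]
    exact pow_le_pow_left₀ (mul_nonneg hB (hx i)) (hxc i) 2
  have hS : 0 ≤ ∑ i, x i ^ 2 := sum_nonneg fun i _ => sq_nonneg (x i)
  calc ∑ i, x i ^ 2 ≤ Fintype.card ι * B ^ 2 * ∑ i, x i ^ 2 := le_mul_of_one_le_left hS hcard
    _ = Fintype.card ι * (B ^ 2 * ∑ i, x i ^ 2) := by ring
    _ ≤ Fintype.card ι * (Fintype.card ι * c ^ 2) := by gcongr
    _ = Fintype.card ι ^ 2 * c ^ 2 := by ring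

theorem sq_mul_add_div_eq {σ b l : ℝ} (hσ : σ ≠ 0) (hb : b ≠ 0) :
    ((σ * b) ^ 2 + l) / (σ ^ 2 * b) = b + l / (σ ^ 2 * b) := by
  field_simp

theorem mul_sq_mul_add_div_le {σ b B κ l : ℝ} (hσ : 0 < σ) (hb : 0 < b) (hbB : b ≤ B)
    (hB : B ≤ 1) (hl : 0 ≤ l) (hBd : B ≤ κ ^ 2 * (σ ^ 2 * b)) :
    B * (((σ * b) ^ 2 + l) / (σ ^ 2 * b)) ≤ 1 + l * κ ^ 2 := by
  have hd : 0 < σ ^ 2 * b := by positivity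
  have hfirst : B * b ≤ 1 := by nlinarith
  have hsecond : B * (l / (σ ^ 2 * b)) ≤ l * κ ^ 2 := by
    rw [mul_div_assoc', div_le_iff₀ hd]
    nlinarith
  rw [sq_mul_add_div_eq hσ.ne' hb.ne', mul_add]
  linarith

/-- Estimate of Appendix B of the paper for the post-selection success probability
of step 5 of the DYXL algorithm:
`∑_j (((σ_j β_j)² + λ₂)/(σ_j² β_j))² ≤ k² (1 + λ₂ κ²)²`. -/
theorem dyxl_postselection_bound
    (k : ℕ) (hk : 1 ≤ k) (κ lam2 : ℝ)
    (hκ : 1 ≤ κ) (hlam2 : 0 < lam2)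
    (σ β : Fin k → ℝ)
    (hσpos : ∀ j, 0 < σ j) (hβpos : ∀ j, 0 < β j)
    (hσlast : σ ⟨k - 1, by omega⟩ = 1 / κ)
    (hβmono : Monotone β)
    (hanti : Antitone (fun j => σ j ^ 2 * β j))
    (hsum : ∑ j, β j ^ 2 = 1) :
    ∑ j : Fin k, (((σ j * β j) ^ 2 + lam2) / (σ j ^ 2 * β j)) ^ 2
      ≤ (k : ℝ) ^ 2 * (1 + lam2 * κ ^ 2) ^ 2 := by
  set L : Fin k := ⟨k - 1, by omega⟩
  have hle_last (j : Fin k) : j ≤ L := Fin.mk_le_mk.mpr (by omega)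
  have hβL : β L ≤ 1 := by
    have hsq := hsum ▸ single_le_sum (fun i _ => sq_nonneg (β i)) (mem_univ L)
    nlinarith [hβpos L]
  have hcard : 1 ≤ (Fintype.card (Fin k) : ℝ) * β L ^ 2 :=
    one_le_card_mul_sq_of_sum_sq_eq_one (fun j => (hβpos j).le) (fun j => hβmono (hle_last j)) hsum
  have hden (j : Fin k) : β L ≤ κ ^ 2 * (σ j ^ 2 * β j) := by
    have hκ0 : κ ≠ 0 := (zero_lt_one.trans_le hκ).ne'
    calc β L = κ ^ 2 * (σ L ^ 2 * β L) := by rw [hσlast]; field_simp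
      _ ≤ κ ^ 2 * (σ j ^ 2 * β j) := mul_le_mul_of_nonneg_left (hanti (hle_last j)) (sq_nonneg κ)
  have hterm_nonneg (j : Fin k) : 0 ≤ ((σ j * β j) ^ 2 + lam2) / (σ j ^ 2 * β j) :=
    div_nonneg (add_nonneg (sq_nonneg _) hlam2.le) (mul_pos (pow_pos (hσpos j) 2) (hβpos j)).le
  have hbound := sum_sq_le_card_sq_mul_sq_of_mul_le hterm_nonneg (hβpos L).le
    (fun j => mul_sq_mul_add_div_le (hσpos j) (hβpos j) (hβmono (hle_last j)) hβL hlam2.le (hden j))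
    hcard
  simpa only [Fintype.card_fin] using hbound
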